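/- Consider the hybrid setup, with λ_min > 0 and M := max(1−δ, e^{−λ_min}) ∈ (0,1), where the feedback gain is constant: γ(t) ≡ γ₀ > 0 and γ_j = γ₀ for all j. Assume M + μ*·𝓛 < 1 and 𝓛·M^{−1} + γ₀·ln M < 0. Then for all n ≥ 0 and all t ∈ [a_n, b_n], ‖ε_n(t)‖ ≤ ‖ε_0(a_0)‖·exp((𝓛·M^{−1} + γ₀·ln M)·(∑_{j=0}^{n−1}(b_j−a_j) + (t−a_n)))·(M + μ*·𝓛)^n ≤ ‖ε_0(a_0)‖·(M + μ*·𝓛)^n, and consequently sup_{t ∈ [a_n,b_n]} ‖ε_n(t)‖ → 0 as n → ∞. -/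

import Mathlib

/-!
On each interval the squared norm satisfies `(‖ε‖²)' = 2⟪ε, ε'⟫ ≤ 2(𝓛 - γ₀ λ_min)‖ε‖²`, by the
Rayleigh bound `⟪x, Bx⟫ ≥ λ_min ‖x‖²`, so Grönwall gives exponential decay at the rate
`𝓛 - γ₀ λ_min ≤ 𝓛 M⁻¹ + γ₀ ln M`. At a jump, `I - μ_j γ₀ B` has eigenvalues in
`[0, 1 - δ] ⊆ [0, M]`, so it contracts by `M`, and the perturbation adds at most `μ* 𝓛`.
Chaining the two estimates along the intervals gives the bound, and `M + μ* 𝓛 < 1` makes it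
tend to zero.
-/

open Set Filter Topology Finset
open scoped RealInnerProductSpace

section Eigenbasis

variable {ι E : Type*} [Fintype ι] [NormedAddCommGroup E] [InnerProductSpace ℝ E]
  (v : OrthonormalBasis ι ℝ E) {T : E →ₗ[ℝ] E} {ev : ι → ℝ}

lemma OrthonormalBasis.inner_map_eq_of_isSymmetric (hT : T.IsSymmetric)
    (hv : ∀ i, T (v i) = ev i • v i) (x : E) (i : ι) :
    ⟪v i, T x⟫ = ev i * ⟪v i, x⟫ := by
  rw [← hT, hv, real_inner_smul_left]

lemma OrthonormalBasis.mul_norm_sq_le_inner_map (hT : T.IsSymmetric)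
    (hv : ∀ i, T (v i) = ev i • v i) {m : ℝ} (hm : ∀ i, m ≤ ev i) (x : E) :
    m * ‖x‖ ^ 2 ≤ ⟪x, T x⟫ := by
  rw [← v.sum_sq_inner_right, ← v.sum_inner_mul_inner, Finset.mul_sum]
  refine Finset.sum_le_sum fun i _ => ?_
  rw [v.inner_map_eq_of_isSymmetric hT hv, real_inner_comm]
  nlinarith [hm i, sq_nonneg ⟪v i, x⟫]

lemma OrthonormalBasis.norm_sub_smul_map_le (hT : T.IsSymmetric)
    (hv : ∀ i, T (v i) = ev i • v i) {c M : ℝ} (hM : 0 ≤ M)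
    (hcM : ∀ i, |1 - c * ev i| ≤ M) (x : E) :
    ‖x - c • T x‖ ≤ M * ‖x‖ := by
  refine le_of_sq_le_sq ?_ (by positivity)
  rw [mul_pow, ← v.sum_sq_inner_right, ← v.sum_sq_inner_right, Finset.mul_sum]
  refine Finset.sum_le_sum fun i _ => ?_
  have hi : ⟪v i, x - c • T x⟫ = (1 - c * ev i) * ⟪v i, x⟫ := by
    rw [inner_sub_right, real_inner_smul_right, v.inner_map_eq_of_isSymmetric hT hv]
    ring
  rw [hi, mul_pow]
  exact mul_le_mul_of_nonneg_right (sq_le_sq' (abs_le.1 (hcM i)).1 (abs_le.1 (hcM i)).2)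
    (sq_nonneg _)

end Eigenbasis

namespace Matrix.IsHermitian

variable {n : Type*} [Fintype n] [DecidableEq n] {B : Matrix n n ℝ} (hB : B.IsHermitian)

lemma toEuclideanCLM_eigenvectorBasis (i : n) :
    toEuclideanCLM (𝕜 := ℝ) B (hB.eigenvectorBasis i)
      = hB.eigenvalues i • hB.eigenvectorBasis i := by
  ext1
  rw [ofLp_toEuclideanCLM, hB.mulVec_eigenvectorBasis, WithLp.ofLp_smul]

lemma mul_norm_sq_le_inner_toEuclideanCLM {m : ℝ} (hm : ∀ i, m ≤ hB.eigenvalues i)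
    (x : EuclideanSpace ℝ n) :
    m * ‖x‖ ^ 2 ≤ ⟪x, toEuclideanCLM (𝕜 := ℝ) B x⟫ :=
  hB.eigenvectorBasis.mul_norm_sq_le_inner_map (T := toEuclideanLin B)
    (isSymmetric_toEuclideanLin_iff.2 hB) hB.toEuclideanCLM_eigenvectorBasis hm x

lemma norm_toEuclideanCLM_one_sub_smul_le {c M : ℝ} (hM : 0 ≤ M)
    (hcM : ∀ i, |1 - c * hB.eigenvalues i| ≤ M) (x : EuclideanSpace ℝ n) :
    ‖toEuclideanCLM (𝕜 := ℝ) (1 - c • B) x‖ ≤ M * ‖x‖ := by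
  rw [map_sub, map_one, map_smul]
  exact hB.eigenvectorBasis.norm_sub_smul_map_le (T := toEuclideanLin B)
    (isSymmetric_toEuclideanLin_iff.2 hB) hB.toEuclideanCLM_eigenvectorBasis hM hcM x

end Matrix.IsHermitian

section Flow

variable {E : Type*} [NormedAddCommGroup E] [InnerProductSpace ℝ E]
  {f f' g : ℝ → E} {a b K : ℝ}

lemma norm_le_mul_exp_of_inner_deriv_le (hf : ∀ t ∈ Icc a b, HasDerivAt f (f' t) t)
    (hK : ∀ t ∈ Ico a b, ⟪f t, f' t⟫ ≤ K * ‖f t‖ ^ 2) :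
    ∀ t ∈ Icc a b, ‖f t‖ ≤ ‖f a‖ * Real.exp (K * (t - a)) := by
  have hF : ∀ t ∈ Icc a b, HasDerivAt (fun s => ‖f s‖ ^ 2) (2 * ⟪f t, f' t⟫) t :=
    fun t ht => (hf t ht).norm_sq
  have hgron := le_gronwallBound_of_liminf_deriv_right_le (δ := ‖f a‖ ^ 2) (K := 2 * K)
    (ε := 0) (fun t ht => (hF t ht).continuousAt.continuousWithinAt)
    (fun t ht r hr => (hF t (Ico_subset_Icc_self ht)).hasDerivWithinAt.liminf_right_slope_le hr)
    le_rfl (fun t ht => by linarith [hK t ht])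
  intro t ht
  refine le_of_sq_le_sq ?_ (by positivity)
  calc ‖f t‖ ^ 2 ≤ ‖f a‖ ^ 2 * Real.exp (2 * K * (t - a)) := by
        simpa only [gronwallBound_ε0] using hgron t ht
    _ = (‖f a‖ * Real.exp (K * (t - a))) ^ 2 := by
        rw [mul_pow, ← Real.exp_nat_mul]; ring_nf

lemma norm_le_mul_exp_of_perturbed_linear_flow {T : E →L[ℝ] E} {m γ L : ℝ}
    (hT : ∀ x, m * ‖x‖ ^ 2 ≤ ⟪x, T x⟫) (hγ : 0 ≤ γ)
    (hf : ∀ t ∈ Icc a b, HasDerivAt f (-γ • T (f t) + g t) t)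
    (hg : ∀ t ∈ Icc a b, ‖g t‖ ≤ L * ‖f t‖) :
    ∀ t ∈ Icc a b, ‖f t‖ ≤ ‖f a‖ * Real.exp ((L - γ * m) * (t - a)) := by
  refine norm_le_mul_exp_of_inner_deriv_le hf fun t ht => ?_
  have hfg : ⟪f t, g t⟫ ≤ L * ‖f t‖ ^ 2 := by
    calc ⟪f t, g t⟫ ≤ ‖f t‖ * ‖g t‖ := real_inner_le_norm _ _
      _ ≤ ‖f t‖ * (L * ‖f t‖) := by gcongr; exact hg t (Ico_subset_Icc_self ht)
      _ = L * ‖f t‖ ^ 2 := by ring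
  rw [inner_add_right, real_inner_smul_right]
  nlinarith [hfg, mul_le_mul_of_nonneg_left (hT (f t)) hγ]

lemma norm_add_smul_le_of_le {x y h : E} {M μ μstar L : ℝ} (hy : ‖y‖ ≤ M * ‖x‖) (hμ : 0 ≤ μ)
    (hμle : μ ≤ μstar) (hh : ‖h‖ ≤ L * ‖x‖) :
    ‖y + μ • h‖ ≤ (M + μstar * L) * ‖x‖ := by
  have hμh : ‖μ • h‖ ≤ μstar * L * ‖x‖ := by
    rw [norm_smul, Real.norm_of_nonneg hμ, mul_assoc]
    exact mul_le_mul hμle hh (norm_nonneg _) (hμ.trans hμle)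
  rw [add_mul]
  exact norm_add_le_of_le hy hμh

end Flow

lemma le_mul_exp_mul_pow_of_flow_of_jump {u : ℕ → ℝ → ℝ} {a b : ℕ → ℝ} {C r : ℝ}
    (hr : 0 ≤ r) (hab : ∀ n, a n ≤ b n)
    (hflow : ∀ n, ∀ t ∈ Icc (a n) (b n), u n t ≤ u n (a n) * Real.exp (C * (t - a n)))
    (hjump : ∀ n, u (n + 1) (a (n + 1)) ≤ r * u n (b n)) (n : ℕ) :
    ∀ t ∈ Icc (a n) (b n),
      u n t ≤ u 0 (a 0) * Real.exp (C * ((∑ j ∈ range n, (b j - a j)) + (t - a n))) * r ^ n := by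
  induction n with
  | zero => simpa using hflow 0
  | succ n ih =>
    intro t ht
    calc u (n + 1) t ≤ u (n + 1) (a (n + 1)) * Real.exp (C * (t - a (n + 1))) := hflow _ t ht
      _ ≤ r * (u 0 (a 0) * Real.exp (C * ((∑ j ∈ range n, (b j - a j)) + (b n - a n))) * r ^ n)
            * Real.exp (C * (t - a (n + 1))) := by
          gcongr
          exact (hjump n).trans (mul_le_mul_of_nonneg_left (ih (b n) ⟨hab n, le_rfl⟩) hr)
      _ = _ := by rw [sum_range_succ, pow_succ, mul_add C _ (t - _), Real.exp_add]; ring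

lemma tendsto_iSup_of_le_geometric {u : ℕ → ℝ → ℝ} {s : ℕ → Set ℝ} {c r : ℝ}
    (hu : ∀ n t, 0 ≤ u n t) (hle : ∀ n, ∀ t ∈ s n, u n t ≤ c * r ^ n)
    (hc : 0 ≤ c) (hr0 : 0 ≤ r) (hr1 : r < 1) :
    Tendsto (fun n => ⨆ t ∈ s n, u n t) atTop (𝓝 0) := by
  refine squeeze_zero (fun n => Real.iSup_nonneg fun t => Real.iSup_nonneg fun _ => hu n t)
    (fun n => Real.iSup_le (fun t => Real.iSup_le (hle n t) (by positivity)) (by positivity)) ?_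
  simpa using (tendsto_pow_atTop_nhds_zero_of_lt_one hr0 hr1).const_mul c

lemma sub_mul_le_mul_inv_add_mul_log {L γ m M : ℝ} (hL : 0 ≤ L) (hγ : 0 ≤ γ)
    (hmM : Real.exp (-m) ≤ M) (hM1 : M ≤ 1) :
    L - γ * m ≤ L * M⁻¹ + γ * Real.log M := by
  have hM0 : 0 < M := (Real.exp_pos _).trans_le hmM
  have hinv : L ≤ L * M⁻¹ := le_mul_of_one_le_right hL (one_le_inv₀ hM0 |>.2 hM1)
  have hlog : -m ≤ Real.log M := (Real.le_log_iff_exp_le hM0).2 hmM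
  nlinarith

lemma mul_exp_mul_mul_le {A C S R : ℝ} (hA : 0 ≤ A) (hC : C ≤ 0) (hS : 0 ≤ S) (hR : 0 ≤ R) :
    A * Real.exp (C * S) * R ≤ A * R := by
  gcongr
  exact mul_le_of_le_one_right hA (Real.exp_le_one_iff.2 (mul_nonpos_of_nonpos_of_nonneg hC hS))

theorem stmt14_general {N : ℕ} (B : Matrix (Fin N) (Fin N) ℝ)
    (hB : B.IsHermitian) (lmin : ℝ)
    (hmin_le : ∀ i, lmin ≤ hB.eigenvalues i)
    (a b : ℕ → ℝ) (hab : ∀ j, a j ≤ b j) (hba : ∀ j, b j < a (j + 1))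
    (μ : ℕ → ℝ) (hμdef : ∀ j, μ j = a (j + 1) - b j)
    (μstar : ℝ) (hμle : ∀ j, μ j ≤ μstar)
    (γ₀ : ℝ) (hγ₀ : 0 < γ₀)
    (δ : ℝ)
    (L : ℝ) (hL : 0 < L)
    (hγd : ∀ j i, δ ≤ μ j * γ₀ * hB.eigenvalues i ∧ μ j * γ₀ * hB.eigenvalues i < 1)
    (ε g : ℕ → ℝ → EuclideanSpace ℝ (Fin N))
    (hode : ∀ j, ∀ t ∈ Set.Icc (a j) (b j),
      HasDerivAt (ε j)
        (-γ₀ • (Matrix.toEuclideanCLM (𝕜 := ℝ) (n := Fin N) B (ε j t)) + g j t) t)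
    (hg : ∀ j, ∀ t ∈ Set.Icc (a j) (b j), ‖g j t‖ ≤ L * ‖ε j t‖)
    (h : ℕ → EuclideanSpace ℝ (Fin N))
    (hjump : ∀ j, ε (j + 1) (a (j + 1)) =
      Matrix.toEuclideanCLM (𝕜 := ℝ) (n := Fin N) (1 - (μ j * γ₀) • B) (ε j (b j))
        + μ j • h j)
    (hh : ∀ j, ‖h j‖ ≤ L * ‖ε j (b j)‖)
    (M : ℝ) (hM : M = max (1 - δ) (Real.exp (-lmin)))
    (hM1 : M + μstar * L < 1)
    (hneg : L * M⁻¹ + γ₀ * Real.log M < 0) :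
    (∀ n, ∀ t ∈ Set.Icc (a n) (b n),
      ‖ε n t‖ ≤ ‖ε 0 (a 0)‖
          * Real.exp ((L * M⁻¹ + γ₀ * Real.log M)
              * ((∑ j ∈ Finset.range n, (b j - a j)) + (t - a n)))
          * (M + μstar * L) ^ n ∧
      ‖ε 0 (a 0)‖
          * Real.exp ((L * M⁻¹ + γ₀ * Real.log M)
              * ((∑ j ∈ Finset.range n, (b j - a j)) + (t - a n)))
          * (M + μstar * L) ^ n ≤ ‖ε 0 (a 0)‖ * (M + μstar * L) ^ n) ∧
    Filter.Tendsto (fun n => ⨆ t ∈ Set.Icc (a n) (b n), ‖ε n t‖)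
      Filter.atTop (nhds 0) := by
  have hμ : ∀ j, 0 ≤ μ j := fun j => by linarith [hμdef j, hba j]
  have hexpM : Real.exp (-lmin) ≤ M := hM ▸ le_max_right _ _
  have hM0 : 0 ≤ M := (Real.exp_pos _).le.trans hexpM
  have hμL : 0 ≤ μstar * L := mul_nonneg ((hμ 0).trans (hμle 0)) hL.le
  have hr : 0 ≤ M + μstar * L := add_nonneg hM0 hμL
  have hrate := sub_mul_le_mul_inv_add_mul_log hL.le hγ₀.le hexpM (by linarith)
  have hflow : ∀ n, ∀ t ∈ Icc (a n) (b n),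
      ‖ε n t‖ ≤ ‖ε n (a n)‖ * Real.exp ((L * M⁻¹ + γ₀ * Real.log M) * (t - a n)) :=
    fun n t ht => (norm_le_mul_exp_of_perturbed_linear_flow
      (hB.mul_norm_sq_le_inner_toEuclideanCLM hmin_le) hγ₀.le (hode n) (hg n) t ht).trans
      (mul_le_mul_of_nonneg_left (Real.exp_le_exp.2
        (mul_le_mul_of_nonneg_right hrate (sub_nonneg.2 ht.1))) (norm_nonneg _))
  have hcontract : ∀ n i, |1 - μ n * γ₀ * hB.eigenvalues i| ≤ M := fun n i =>
    abs_le.2 ⟨by linarith [(hγd n i).2], by linarith [(hγd n i).1, hM ▸ le_max_left (1 - δ) _]⟩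
  have hbound := le_mul_exp_mul_pow_of_flow_of_jump hr hab hflow fun n => by
    rw [hjump n]
    exact norm_add_smul_le_of_le (hB.norm_toEuclideanCLM_one_sub_smul_le hM0 (hcontract n) _)
      (hμ n) (hμle n) (hh n)
  have hdecay := fun n t (ht : t ∈ Icc (a n) (b n)) => mul_exp_mul_mul_le
    (norm_nonneg (ε 0 (a 0))) hneg.le
    (add_nonneg (sum_nonneg (s := range n) fun j _ => sub_nonneg.2 (hab j)) (sub_nonneg.2 ht.1))
    (pow_nonneg hr n)
  exact ⟨fun n t ht => ⟨hbound n t ht, hdecay n t ht⟩, tendsto_iSup_of_le_geometric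
    (fun _ _ => norm_nonneg _) (fun n t ht => (hbound n t ht).trans (hdecay n t ht))
    (norm_nonneg _) hr hM1⟩

/-- hybrid setup with constant feedback gain `γ₀ > 0` (both on the
intervals and at the jumps), `λmin > 0`, `M = max (1-δ) e^{-λmin} ∈ (0,1)`,
`M + μ* 𝓛 < 1` and `𝓛 M⁻¹ + γ₀ ln M < 0`.  Then for all `n` and `t ∈ [a_n, b_n]`,
`‖ε_n(t)‖ ≤ ‖ε_0(a_0)‖ exp((𝓛 M⁻¹ + γ₀ ln M)(∑_{j<n}(b_j - a_j) + (t - a_n)))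
  (M + μ* 𝓛)^n ≤ ‖ε_0(a_0)‖ (M + μ* 𝓛)^n`, and consequently
`sup_{t ∈ [a_n, b_n]} ‖ε_n(t)‖ → 0` as `n → ∞`. -/
theorem stmt14 {N : ℕ} (hN : 0 < N) (B : Matrix (Fin N) (Fin N) ℝ)
    (hB : B.IsHermitian) (lmin : ℝ)
    (hmin_le : ∀ i, lmin ≤ hB.eigenvalues i)
    (hmin_mem : ∃ i, hB.eigenvalues i = lmin)
    (hlmin_pos : 0 < lmin)
    (a b : ℕ → ℝ) (hab : ∀ j, a j ≤ b j) (hba : ∀ j, b j < a (j + 1))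
    (μ : ℕ → ℝ) (hμdef : ∀ j, μ j = a (j + 1) - b j)
    (μstar : ℝ) (hμstar : 0 < μstar) (hμle : ∀ j, μ j ≤ μstar)
    (γ₀ : ℝ) (hγ₀ : 0 < γ₀)
    (δ : ℝ) (hδ0 : 0 < δ) (hδ1 : δ < 1)
    (L : ℝ) (hL : 0 < L)
    (hγd : ∀ j i, δ ≤ μ j * γ₀ * hB.eigenvalues i ∧ μ j * γ₀ * hB.eigenvalues i < 1)
    (ε g : ℕ → ℝ → EuclideanSpace ℝ (Fin N))
    (hode : ∀ j, ∀ t ∈ Set.Icc (a j) (b j),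
      HasDerivAt (ε j)
        (-γ₀ • (Matrix.toEuclideanCLM (𝕜 := ℝ) (n := Fin N) B (ε j t)) + g j t) t)
    (hg : ∀ j, ∀ t ∈ Set.Icc (a j) (b j), ‖g j t‖ ≤ L * ‖ε j t‖)
    (h : ℕ → EuclideanSpace ℝ (Fin N))
    (hjump : ∀ j, ε (j + 1) (a (j + 1)) =
      Matrix.toEuclideanCLM (𝕜 := ℝ) (n := Fin N) (1 - (μ j * γ₀) • B) (ε j (b j))
        + μ j • h j)
    (hh : ∀ j, ‖h j‖ ≤ L * ‖ε j (b j)‖)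
    (M : ℝ) (hM : M = max (1 - δ) (Real.exp (-lmin)))
    (hM1 : M + μstar * L < 1)
    (hneg : L * M⁻¹ + γ₀ * Real.log M < 0) :
    (∀ n, ∀ t ∈ Set.Icc (a n) (b n),
      ‖ε n t‖ ≤ ‖ε 0 (a 0)‖
          * Real.exp ((L * M⁻¹ + γ₀ * Real.log M)
              * ((∑ j ∈ Finset.range n, (b j - a j)) + (t - a n)))
          * (M + μstar * L) ^ n ∧
      ‖ε 0 (a 0)‖
          * Real.exp ((L * M⁻¹ + γ₀ * Real.log M)
              * ((∑ j ∈ Finset.range n, (b j - a j)) + (t - a n)))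
          * (M + μstar * L) ^ n ≤ ‖ε 0 (a 0)‖ * (M + μstar * L) ^ n) ∧
    Filter.Tendsto (fun n => ⨆ t ∈ Set.Icc (a n) (b n), ‖ε n t‖)
      Filter.atTop (nhds 0) :=
  stmt14_general B hB lmin hmin_le a b hab hba μ hμdef μstar hμle γ₀ hγ₀ δ L hL hγd ε g hode hg h
    hjump hh M hM hM1 hneg
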